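/- (Proposition 3.4, reciprocal identity) Let Mᵒ = (bᵒ, uᵒ) and Mᵃ = (bᵃ, uᵃ) be subjective opinions over K classes with uᵒ > 0 and uᵃ > 0. Then the conflict C satisfies C < 1, and the uncertainty u of the reduced Dempster combination satisfies u = 1 / (∑_k (bᵃ k * bᵒ k / (uᵃ * uᵒ) + bᵃ k / uᵃ + bᵒ k / uᵒ) + 1). -/

import Mathlib

open Finset

/-- The conflict between two belief-mass assignments: `C = ∑_{i ≠ j} b₁ i * b₂ j`. -/
noncomputable def conflict {K : ℕ} (b₁ b₂ : Fin K → ℝ) : ℝ :=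
  ∑ i, ∑ j ∈ univ.filter (fun j => j ≠ i), b₁ i * b₂ j

/-- The belief masses of the reduced Dempster combination:
`b k = (b¹ k * b² k + b¹ k * u² + b² k * u¹) / (1 − C)`. -/
noncomputable def combBelief {K : ℕ} (b₁ b₂ : Fin K → ℝ) (u₁ u₂ : ℝ) (k : Fin K) : ℝ :=
  (b₁ k * b₂ k + b₁ k * u₂ + b₂ k * u₁) / (1 - conflict b₁ b₂)

/-- The uncertainty mass of the reduced Dempster combination: `u = u¹ * u² / (1 − C)`. -/
noncomputable def combUncertainty {K : ℕ} (b₁ b₂ : Fin K → ℝ) (u₁ u₂ : ℝ) : ℝ :=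
  (u₁ * u₂) / (1 - conflict b₁ b₂)

/-!
Expanding `1 = (u₁ + ∑ b₁) (u₂ + ∑ b₂)` and removing the off-diagonal products `b₁ i b₂ j`
shows that `1 - C = u₁ u₂ + ∑ₖ (b₁ k b₂ k + b₁ k u₂ + b₂ k u₁)`, i.e. the normaliser of
Dempster's rule is the total unnormalised mass. It is at least `u₁ u₂ > 0`, and dividing it by
`u₁ u₂` gives the reciprocal of the combined uncertainty.
-/

section

variable {K : ℕ} (b₁ b₂ : Fin K → ℝ) {u₁ u₂ : ℝ}

theorem conflict_eq_sum_mul_sum_sub :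
    conflict b₁ b₂ = (∑ k, b₁ k) * (∑ k, b₂ k) - ∑ k, b₁ k * b₂ k := by
  have row (i : Fin K) : ∑ j ∈ univ.filter (fun j => j ≠ i), b₁ i * b₂ j
      = b₁ i * ∑ j, b₂ j - b₁ i * b₂ i := by
    rw [← mul_sum, filter_ne', sum_erase_eq_sub (mem_univ i), mul_sub]
  simp only [conflict, row, sum_sub_distrib, ← sum_mul]

theorem one_sub_conflict_eq (h₁ : u₁ + ∑ k, b₁ k = 1) (h₂ : u₂ + ∑ k, b₂ k = 1) :
    1 - conflict b₁ b₂ = u₁ * u₂ + ∑ k, (b₁ k * b₂ k + b₁ k * u₂ + b₂ k * u₁) := by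
  rw [conflict_eq_sum_mul_sum_sub, sum_add_distrib, sum_add_distrib, ← sum_mul, ← sum_mul]
  linear_combination -(u₂ + ∑ k, b₂ k) * h₁ - h₂

theorem mul_le_one_sub_conflict (hb₁ : ∀ k, 0 ≤ b₁ k) (hb₂ : ∀ k, 0 ≤ b₂ k)
    (hu₁ : 0 ≤ u₁) (hu₂ : 0 ≤ u₂) (h₁ : u₁ + ∑ k, b₁ k = 1) (h₂ : u₂ + ∑ k, b₂ k = 1) :
    u₁ * u₂ ≤ 1 - conflict b₁ b₂ := by
  rw [one_sub_conflict_eq b₁ b₂ h₁ h₂, le_add_iff_nonneg_right]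
  exact sum_nonneg fun k _ => by have := hb₁ k; have := hb₂ k; positivity

theorem conflict_lt_one (hb₁ : ∀ k, 0 ≤ b₁ k) (hb₂ : ∀ k, 0 ≤ b₂ k)
    (hu₁ : 0 < u₁) (hu₂ : 0 < u₂) (h₁ : u₁ + ∑ k, b₁ k = 1) (h₂ : u₂ + ∑ k, b₂ k = 1) :
    conflict b₁ b₂ < 1 := by
  have := mul_le_one_sub_conflict b₁ b₂ hb₁ hb₂ hu₁.le hu₂.le h₁ h₂
  linarith [mul_pos hu₁ hu₂]

theorem combUncertainty_eq_one_div (hu₁ : u₁ ≠ 0) (hu₂ : u₂ ≠ 0)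
    (h₁ : u₁ + ∑ k, b₁ k = 1) (h₂ : u₂ + ∑ k, b₂ k = 1) :
    combUncertainty b₁ b₂ u₁ u₂ =
      1 / (∑ k, (b₁ k * b₂ k / (u₁ * u₂) + b₁ k / u₁ + b₂ k / u₂) + 1) := by
  have hsum : ∑ k, (b₁ k * b₂ k / (u₁ * u₂) + b₁ k / u₁ + b₂ k / u₂)
      = (∑ k, (b₁ k * b₂ k + b₁ k * u₂ + b₂ k * u₁)) / (u₁ * u₂) := by
    rw [sum_div]
    exact sum_congr rfl fun k _ => by field_simp
  rw [combUncertainty, one_sub_conflict_eq b₁ b₂ h₁ h₂, hsum]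
  field_simp
  ring

end

theorem comb_uncertainty_reciprocal_general (K : ℕ)
    (bo ba : Fin K → ℝ) (uo ua : ℝ)
    (hbo : ∀ k, 0 ≤ bo k) (huo : 0 < uo) (hso : uo + ∑ k, bo k = 1)
    (hba : ∀ k, 0 ≤ ba k) (hua : 0 < ua) (hsa : ua + ∑ k, ba k = 1) :
    conflict bo ba < 1 ∧
      combUncertainty bo ba uo ua =
        1 / ((∑ k, (ba k * bo k / (ua * uo) + ba k / ua + bo k / uo)) + 1) := by
  refine ⟨conflict_lt_one bo ba hbo hba huo hua hso hsa, ?_⟩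
  rw [combUncertainty_eq_one_div bo ba huo.ne' hua.ne' hso hsa]
  congr 2
  exact sum_congr rfl fun k _ => by ring

/-- Proposition 3.4, reciprocal identity: for opinions with strictly positive
uncertainties the conflict is `< 1` and the combined uncertainty satisfies
`u = 1 / (∑_k (bᵃ k * bᵒ k / (uᵃ * uᵒ) + bᵃ k / uᵃ + bᵒ k / uᵒ) + 1)`. -/
theorem comb_uncertainty_reciprocal (K : ℕ) (hK : 1 ≤ K)
    (bo ba : Fin K → ℝ) (uo ua : ℝ)
    (hbo : ∀ k, 0 ≤ bo k) (huo : 0 < uo) (hso : uo + ∑ k, bo k = 1)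
    (hba : ∀ k, 0 ≤ ba k) (hua : 0 < ua) (hsa : ua + ∑ k, ba k = 1) :
    conflict bo ba < 1 ∧
      combUncertainty bo ba uo ua =
        1 / ((∑ k, (ba k * bo k / (ua * uo) + ba k / ua + bo k / uo)) + 1) :=
  comb_uncertainty_reciprocal_general K bo ba uo ua hbo huo hso hba hua hsa
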